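/- arXiv:1412.1644 — 7 statements merged into one kernel-verified Lean document; each statement's English description precedes it below -/
import Mathlib

section
/- Let 0 < a < b be real numbers and let n be a positive even integer. Then the polynomial S_n(x) = T_{n/2}((2x² − a² − b²)/(b² − a²)) satisfies S_n′(b) = n²·b/(b²−a²) and sup_{x∈E} |S_n′(x)| = n²·b/(b²−a²), where E = [−b,−a] ∪ [a,b]. In particular the Markov-type bound n²b/(b²−a²) on two symmetric intervals is attained by S_n. -/
/-!
The substitution `u(x) = (2x² - a² - b²)/(b² - a²)` maps `E = [-b,-a] ∪ [a,b]` onto `[-1, 1]`,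
with `u(b) = 1` and `|u'(x)| = 4|x|/(b² - a²) ≤ 4b/(b² - a²)` on `E`. Writing `n = 2m`, the chain
rule gives `S_n'(x) = T_m'(u x) · u'(x)`, and on `[-1, 1]` the derivative of `T_m` is largest in
absolute value at `1`, where it equals `m²`. Hence `|S_n'| ≤ 4m² b/(b² - a²) = n² b/(b² - a²)` on
`E`, with equality at `b`.
-/

open Polynomial Set

namespace Polynomial.Chebyshev

theorem abs_eval_derivative_T_real_le (m : ℤ) {t : ℝ} (ht : |t| ≤ 1) :
    |(derivative (T ℝ m)).eval t| ≤ m ^ 2 := by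
  simpa [derivative_T_eval_one] using abs_iterate_derivative_T_real_le m 1 ht

end Polynomial.Chebyshev

/-- The quadratic change of variables sending `[-b,-a] ∪ [a,b]` two-to-one onto `[-1, 1]`. -/
noncomputable def twoIntervalMap (a b x : ℝ) : ℝ :=
  (2 * x ^ 2 - a ^ 2 - b ^ 2) / (b ^ 2 - a ^ 2)

section twoIntervalMap

variable {a b : ℝ}

theorem hasDerivAt_twoIntervalMap (x : ℝ) :
    HasDerivAt (twoIntervalMap a b) (4 * x / (b ^ 2 - a ^ 2)) x := by
  have h := (((hasDerivAt_pow 2 x).const_mul 2).sub_const (a ^ 2)).sub_const (b ^ 2)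
  exact (h.div_const _).congr_deriv (by push_cast; ring)

theorem deriv_eval_comp_twoIntervalMap (p : ℝ[X]) (x : ℝ) :
    deriv (fun y => p.eval (twoIntervalMap a b y)) x =
      (derivative p).eval (twoIntervalMap a b x) * (4 * x / (b ^ 2 - a ^ 2)) :=
  ((p.hasDerivAt _).comp x (hasDerivAt_twoIntervalMap x)).deriv

theorem twoIntervalMap_self_right (hab : a ^ 2 ≠ b ^ 2) : twoIntervalMap a b b = 1 := by
  have : b ^ 2 - a ^ 2 ≠ 0 := sub_ne_zero.mpr hab.symm
  rw [twoIntervalMap, div_eq_one_iff_eq this]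
  ring

theorem abs_twoIntervalMap_le_one {x : ℝ} (hab : a ^ 2 < b ^ 2) (hax : a ^ 2 ≤ x ^ 2)
    (hxb : x ^ 2 ≤ b ^ 2) : |twoIntervalMap a b x| ≤ 1 := by
  have hc : 0 < b ^ 2 - a ^ 2 := sub_pos.mpr hab
  rw [twoIntervalMap, abs_div, abs_of_pos hc, div_le_one hc, abs_le]
  constructor <;> linarith

end twoIntervalMap

theorem mem_Icc_abs_of_mem_union {a b x : ℝ} (ha : 0 ≤ a)
    (hx : x ∈ Icc (-b) (-a) ∪ Icc a b) : |x| ∈ Icc a b := by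
  rcases hx with ⟨h₁, h₂⟩ | ⟨h₁, h₂⟩
  · rw [abs_of_nonpos (by linarith)]
    exact ⟨by linarith, by linarith⟩
  · rw [abs_of_nonneg (by linarith)]
    exact ⟨h₁, h₂⟩

section chebyshevComp

open Polynomial.Chebyshev

variable {a b : ℝ} (m : ℤ)

theorem deriv_T_comp_twoIntervalMap_self_right (hab : a ^ 2 ≠ b ^ 2) :
    deriv (fun y => (T ℝ m).eval (twoIntervalMap a b y)) b =
      4 * m ^ 2 * b / (b ^ 2 - a ^ 2) := by
  rw [deriv_eval_comp_twoIntervalMap, twoIntervalMap_self_right hab, derivative_T_eval_one]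
  ring

theorem abs_deriv_T_comp_twoIntervalMap_le (ha : 0 ≤ a) (hab : a < b) {x : ℝ}
    (hx : x ∈ Icc (-b) (-a) ∪ Icc a b) :
    |deriv (fun y => (T ℝ m).eval (twoIntervalMap a b y)) x| ≤
      4 * m ^ 2 * b / (b ^ 2 - a ^ 2) := by
  have hsq : a ^ 2 < b ^ 2 := by gcongr
  have hc : 0 < b ^ 2 - a ^ 2 := sub_pos.mpr hsq
  obtain ⟨hax, hxb⟩ := mem_Icc_abs_of_mem_union ha hx
  have hu : |twoIntervalMap a b x| ≤ 1 := abs_twoIntervalMap_le_one hsq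
    (sq_abs x ▸ pow_le_pow_left₀ ha hax 2) (sq_abs x ▸ pow_le_pow_left₀ (ha.trans hax) hxb 2)
  calc |deriv (fun y => (T ℝ m).eval (twoIntervalMap a b y)) x|
      = |(derivative (T ℝ m)).eval (twoIntervalMap a b x)| * (4 * |x| / (b ^ 2 - a ^ 2)) := by
        rw [deriv_eval_comp_twoIntervalMap, abs_mul, abs_div, abs_mul 4 x, abs_of_pos hc,
          abs_of_pos (by norm_num : (0 : ℝ) < 4)]
    _ ≤ (m : ℝ) ^ 2 * (4 * b / (b ^ 2 - a ^ 2)) := by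
        gcongr
        exact abs_eval_derivative_T_real_le m hu
    _ = 4 * m ^ 2 * b / (b ^ 2 - a ^ 2) := by ring

end chebyshevComp

theorem markov_bound_attained_by_Sn_general
    (a b : ℝ) (ha : 0 < a) (hab : a < b)
    (n : ℕ) (hne : Even n)
    (E : Set ℝ) (hE : E = Icc (-b) (-a) ∪ Icc a b)
    (S : ℝ → ℝ)
    (hS : ∀ x : ℝ, S x =
      (Polynomial.Chebyshev.T ℝ ((n / 2 : ℕ) : ℤ)).eval
        ((2 * x ^ 2 - a ^ 2 - b ^ 2) / (b ^ 2 - a ^ 2))) :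
    deriv S b = (n : ℝ) ^ 2 * b / (b ^ 2 - a ^ 2) ∧
      sSup ((fun x => |deriv S x|) '' E) = (n : ℝ) ^ 2 * b / (b ^ 2 - a ^ 2) := by
  obtain ⟨m, rfl⟩ := hne
  have hS' : S = fun x => (Chebyshev.T ℝ (m : ℤ)).eval (twoIntervalMap a b x) := by
    funext x
    rw [hS, show (m + m) / 2 = m by omega, twoIntervalMap]
  have hn_sq : ((m + m : ℕ) : ℝ) ^ 2 * b / (b ^ 2 - a ^ 2) =
      4 * ((m : ℤ) : ℝ) ^ 2 * b / (b ^ 2 - a ^ 2) := by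
    push_cast
    ring
  have hb : deriv S b = 4 * ((m : ℤ) : ℝ) ^ 2 * b / (b ^ 2 - a ^ 2) := by
    rw [hS']
    exact deriv_T_comp_twoIntervalMap_self_right m (by gcongr : a ^ 2 < b ^ 2).ne
  rw [hn_sq, hE]
  refine ⟨hb, IsGreatest.csSup_eq ⟨⟨b, Or.inr (right_mem_Icc.mpr hab.le), ?_⟩, ?_⟩⟩
  · change |deriv S b| = _
    rw [hb, abs_eq_self]
    exact div_nonneg (mul_nonneg (by positivity) (ha.trans hab).le) (sub_nonneg.mpr (by gcongr))
  rintro _ ⟨x, hx, rfl⟩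
  rw [hS']
  exact abs_deriv_T_comp_twoIntervalMap_le m ha.le hab hx

theorem markov_bound_attained_by_Sn
    (a b : ℝ) (ha : 0 < a) (hab : a < b)
    (n : ℕ) (hn : 0 < n) (hne : Even n)
    (E : Set ℝ) (hE : E = Icc (-b) (-a) ∪ Icc a b)
    (S : ℝ → ℝ)
    (hS : ∀ x : ℝ, S x =
      (Polynomial.Chebyshev.T ℝ ((n / 2 : ℕ) : ℤ)).eval
        ((2 * x ^ 2 - a ^ 2 - b ^ 2) / (b ^ 2 - a ^ 2))) :
    deriv S b = (n : ℝ) ^ 2 * b / (b ^ 2 - a ^ 2) ∧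
      sSup ((fun x => |deriv S x|) '' E) = (n : ℝ) ^ 2 * b / (b ^ 2 - a ^ 2) :=
  markov_bound_attained_by_Sn_general a b ha hab n hne E hE S hS
end

section
/- Let 0 < a < b be real numbers and let n be a positive even integer. Then the polynomial S_n(x) = T_{n/2}((2x² − a² − b²)/(b² − a²)) satisfies |S_n(x)| > 1 for every x ∈ (−a, a). Moreover, if n is divisible by 4, then S_n(x) > 1 for every x ∈ (−a, a). -/
open Polynomial Set

private lemma T_mono_aux (y : ℝ) (hy : 1 < y) :
    ∀ m : ℕ, 1 ≤ (Polynomial.Chebyshev.T ℝ (m : ℤ)).eval y ∧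
      (Polynomial.Chebyshev.T ℝ (m : ℤ)).eval y <
        (Polynomial.Chebyshev.T ℝ ((m : ℤ) + 1)).eval y := by
  intro m
  induction m with
  | zero => simp [Polynomial.Chebyshev.T_zero, Polynomial.Chebyshev.T_one]; linarith
  | succ k ih =>
    obtain ⟨h1, h2⟩ := ih
    have hrec := Polynomial.Chebyshev.T_add_two ℝ (k : ℤ)
    have he : (Polynomial.Chebyshev.T ℝ ((k : ℤ) + 2)).eval y =
        2 * y * (Polynomial.Chebyshev.T ℝ ((k : ℤ) + 1)).eval y -
          (Polynomial.Chebyshev.T ℝ (k : ℤ)).eval y := by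
      rw [hrec]; simp
    constructor
    · push_cast; linarith
    · push_cast
      have hk1 : (1 : ℝ) ≤ (Polynomial.Chebyshev.T ℝ ((k : ℤ) + 1)).eval y := by linarith
      have : ((k : ℤ) + 1 + 1) = (k : ℤ) + 2 := by ring
      rw [this, he]
      nlinarith

private lemma T_eval_neg (y : ℝ) :
    ∀ m : ℕ, (Polynomial.Chebyshev.T ℝ (m : ℤ)).eval (-y) =
        (-1 : ℝ) ^ m * (Polynomial.Chebyshev.T ℝ (m : ℤ)).eval y ∧
      (Polynomial.Chebyshev.T ℝ ((m : ℤ) + 1)).eval (-y) =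
        (-1 : ℝ) ^ (m + 1) * (Polynomial.Chebyshev.T ℝ ((m : ℤ) + 1)).eval y := by
  intro m
  induction m with
  | zero => simp [Polynomial.Chebyshev.T_zero, Polynomial.Chebyshev.T_one]
  | succ k ih =>
    obtain ⟨h1, h2⟩ := ih
    have he : ∀ z : ℝ, (Polynomial.Chebyshev.T ℝ ((k : ℤ) + 2)).eval z =
        2 * z * (Polynomial.Chebyshev.T ℝ ((k : ℤ) + 1)).eval z -
          (Polynomial.Chebyshev.T ℝ (k : ℤ)).eval z := by
      intro z; rw [Polynomial.Chebyshev.T_add_two ℝ (k : ℤ)]; simp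
    constructor
    · push_cast; exact h2
    · push_cast
      have h3 : ((k : ℤ) + 1 + 1) = (k : ℤ) + 2 := by ring
      rw [h3, he, he, h1, h2]
      ring

theorem Sn_large_in_gap
    (a b : ℝ) (ha : 0 < a) (hab : a < b)
    (n : ℕ) (hn : 0 < n) (hne : Even n)
    (S : ℝ → ℝ)
    (hS : ∀ x : ℝ, S x =
      (Polynomial.Chebyshev.T ℝ ((n / 2 : ℕ) : ℤ)).eval
        ((2 * x ^ 2 - a ^ 2 - b ^ 2) / (b ^ 2 - a ^ 2))) :
    (∀ x ∈ Ioo (-a) a, |S x| > 1) ∧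
      (4 ∣ n → ∀ x ∈ Ioo (-a) a, S x > 1) := by
  set m := n / 2 with hm
  have hm1 : 1 ≤ m := by
    obtain ⟨k, hk⟩ := hne
    omega
  -- key: for x in gap, the argument y satisfies y < -1
  have key : ∀ x ∈ Ioo (-a) a,
      S x = (-1 : ℝ) ^ m * (Polynomial.Chebyshev.T ℝ (m : ℤ)).eval
        (-( (2 * x ^ 2 - a ^ 2 - b ^ 2) / (b ^ 2 - a ^ 2))) ∧
      1 < (Polynomial.Chebyshev.T ℝ (m : ℤ)).eval
        (-( (2 * x ^ 2 - a ^ 2 - b ^ 2) / (b ^ 2 - a ^ 2))) := by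
    intro x hx
    obtain ⟨hx1, hx2⟩ := hx
    set y := (2 * x ^ 2 - a ^ 2 - b ^ 2) / (b ^ 2 - a ^ 2) with hy
    have hba : 0 < b ^ 2 - a ^ 2 := by nlinarith
    have hxa : x ^ 2 < a ^ 2 := by nlinarith
    have hylt : y < -1 := by
      rw [hy, div_lt_iff₀ hba]; nlinarith
    have hny : 1 < -y := by linarith
    have hT := T_mono_aux (-y) hny
    have hgt : 1 < (Polynomial.Chebyshev.T ℝ (m : ℤ)).eval (-y) := by
      obtain ⟨k, hk⟩ : ∃ k, m = k + 1 := ⟨m - 1, by omega⟩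
      have h1 := (hT k).1
      have h2 := (hT k).2
      rw [hk]; push_cast
      linarith
    have hpar := (T_eval_neg (-y) m).1
    rw [neg_neg] at hpar
    refine ⟨?_, hgt⟩
    rw [hS x, ← hy, hpar]
  constructor
  · intro x hx
    obtain ⟨heq, hgt⟩ := key x hx
    rw [heq, abs_mul, abs_pow, abs_neg, abs_one, one_pow, one_mul]
    rw [abs_of_pos (by linarith)]
    exact hgt
  · intro h4 x hx
    obtain ⟨heq, hgt⟩ := key x hx
    have hmev : Even m := by
      obtain ⟨k, hk⟩ := h4; exact ⟨k, by omega⟩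
    rw [heq, hmev.neg_one_pow, one_mul]
    exact hgt
end

section
/- Let 0 < a < b be real numbers and let n be a positive even integer. Then for all real x, the polynomial S_n(x) = T_{n/2}((2x² − a² − b²)/(b² − a²)) satisfies the identity (b² − x²)(x² − a²)·(S_n′(x))² + n²·x²·(S_n(x))² = n²·x². -/
/-!
With `u = (2x² - a² - b²)/(b² - a²)` one has `1 - u² = 4(b² - x²)(x² - a²)/(b² - a²)²` and
`u' = 4x/(b² - a²)`, so the identity is the differential equation
`(1 - u²) T_m'(u)² = m² (1 - T_m(u)²)` of the Chebyshev polynomials composed with `u`, for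
`m = n/2`. That equation is the Pell identity `T_m² + (1 - X²) U_{m-1}² = 1` together with
`T_m' = m U_{m-1}`.
-/

open Polynomial

namespace Polynomial.Chebyshev

variable {R : Type*} [CommRing R]

theorem T_sq_add_one_sub_X_sq_mul_U_sq (n : ℤ) :
    T R n ^ 2 + (1 - X ^ 2) * U R (n - 1) ^ 2 = 1 := by
  -- One step of the recurrence `(T, U) ↦ (X T - (1 - X²) U, X U + T)` preserves the form.
  have step : ∀ k : ℤ, T R (k + 1) ^ 2 + (1 - X ^ 2) * U R k ^ 2 =
      T R k ^ 2 + (1 - X ^ 2) * U R (k - 1) ^ 2 := fun k => by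
    have hT := T_eq_X_mul_T_sub_pol_U R (k - 1)
    have hU := U_eq_X_mul_U_add_T R (k - 1)
    rw [show k - 1 + 2 = k + 1 by ring, sub_add_cancel] at hT
    rw [sub_add_cancel] at hU
    rw [hT, hU]
    ring
  induction n using Int.induction_on with
  | zero => simp
  | succ k ih => rw [add_sub_cancel_right, step, ih]
  | pred k ih => rw [← step, sub_add_cancel, ih]

theorem one_sub_X_sq_mul_derivative_T_sq (n : ℤ) :
    (1 - X ^ 2) * derivative (T R n) ^ 2 = (n : R[X]) ^ 2 * (1 - T R n ^ 2) := by
  rw [T_derivative_eq_U]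
  linear_combination (n : R[X]) ^ 2 * T_sq_add_one_sub_X_sq_mul_U_sq (R := R) n

theorem one_sub_sq_mul_deriv_T_eval_comp_sq {u : ℝ → ℝ} {u' x : ℝ} (hu : HasDerivAt u u' x)
    (m : ℤ) :
    (1 - u x ^ 2) * deriv (fun y => (T ℝ m).eval (u y)) x ^ 2 =
      (m : ℝ) ^ 2 * u' ^ 2 * (1 - (T ℝ m).eval (u x) ^ 2) := by
  have hpoly := congr_arg (eval (u x)) (one_sub_X_sq_mul_derivative_T_sq (R := ℝ) m)
  simp only [eval_mul, eval_sub, eval_one, eval_pow, eval_X, eval_intCast] at hpoly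
  have hderiv : HasDerivAt (fun y => (T ℝ m).eval (u y))
      ((derivative (T ℝ m)).eval (u x) * u') x :=
    ((T ℝ m).hasDerivAt (u x)).comp x hu
  rw [hderiv.deriv]
  linear_combination u' ^ 2 * hpoly

end Polynomial.Chebyshev

theorem Sn_pell_identity_general
    (a b : ℝ) (ha : 0 < a) (hab : a < b)
    (n : ℕ) (hne : Even n)
    (S : ℝ → ℝ)
    (hS : ∀ x : ℝ, S x =
      (Polynomial.Chebyshev.T ℝ ((n / 2 : ℕ) : ℤ)).eval
        ((2 * x ^ 2 - a ^ 2 - b ^ 2) / (b ^ 2 - a ^ 2))) :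
    ∀ x : ℝ,
      (b ^ 2 - x ^ 2) * (x ^ 2 - a ^ 2) * (deriv S x) ^ 2 +
          (n : ℝ) ^ 2 * x ^ 2 * (S x) ^ 2 = (n : ℝ) ^ 2 * x ^ 2 := by
  intro x
  set c := b ^ 2 - a ^ 2
  have hc : c ≠ 0 := by nlinarith
  have hu : HasDerivAt (fun y : ℝ => (2 * y ^ 2 - a ^ 2 - b ^ 2) / c) (4 * x / c) x := by
    refine (((hasDerivAt_pow 2 x).const_mul 2).sub_const (a ^ 2) |>.sub_const (b ^ 2)).div_const c
      |>.congr_deriv ?_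
    norm_num
    ring
  have hode := Chebyshev.one_sub_sq_mul_deriv_T_eval_comp_sq hu ((n / 2 : ℕ) : ℤ)
  rw [← funext hS, ← hS] at hode
  have hn : (n : ℝ) = 2 * (((n / 2 : ℕ) : ℤ) : ℝ) := by
    exact_mod_cast (Nat.mul_div_cancel' (even_iff_two_dvd.mp hne)).symm
  have hone_sub_sq : c ^ 2 * (1 - ((2 * x ^ 2 - a ^ 2 - b ^ 2) / c) ^ 2) =
      4 * ((b ^ 2 - x ^ 2) * (x ^ 2 - a ^ 2)) := by
    field_simp
    ring
  have hderiv_sq : c ^ 2 * (4 * x / c) ^ 2 = 16 * x ^ 2 := by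
    field_simp
    ring
  rw [hn]
  linear_combination c ^ 2 / 4 * hode - deriv S x ^ 2 / 4 * hone_sub_sq
    + (((n / 2 : ℕ) : ℤ) : ℝ) ^ 2 * (1 - S x ^ 2) / 4 * hderiv_sq

theorem Sn_pell_identity
    (a b : ℝ) (ha : 0 < a) (hab : a < b)
    (n : ℕ) (hn : 0 < n) (hne : Even n)
    (S : ℝ → ℝ)
    (hS : ∀ x : ℝ, S x =
      (Polynomial.Chebyshev.T ℝ ((n / 2 : ℕ) : ℤ)).eval
        ((2 * x ^ 2 - a ^ 2 - b ^ 2) / (b ^ 2 - a ^ 2))) :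
    ∀ x : ℝ,
      (b ^ 2 - x ^ 2) * (x ^ 2 - a ^ 2) * (deriv S x) ^ 2 +
          (n : ℝ) ^ 2 * x ^ 2 * (S x) ^ 2 = (n : ℝ) ^ 2 * x ^ 2 :=
  Sn_pell_identity_general a b ha hab n hne S hS
end

section
/- Let 0 < a < b be real numbers, let n be a positive even integer, let E = [−b,−a] ∪ [a,b], and let S_n(x) = T_{n/2}((2x² − a² − b²)/(b² − a²)). If p is a real polynomial of degree at most n with sup_{t∈E} |p(t)| < 1, then the polynomial S_n − p has n distinct real zeros, all of which lie in E (q := n/2 of them in [−b,−a] and q of them in [a,b]). -/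
open Polynomial Set

private lemma T_natDeg_le (k : ℕ) : (Polynomial.Chebyshev.T ℝ (k : ℤ)).natDegree ≤ k := by
  induction k using Nat.strong_induction_on with
  | _ k ih =>
    match k with
    | 0 => simp
    | 1 => simp
    | (m+2) =>
      have h : ((m+2 : ℕ) : ℤ) = (m : ℤ) + 2 := by push_cast; ring
      rw [h, Polynomial.Chebyshev.T_add_two]
      refine le_trans (natDegree_sub_le _ _) (max_le ?_ ?_)
      · refine le_trans (natDegree_mul_le) ?_
        have h1 : ((2 : ℝ[X]) * X).natDegree ≤ 1 :=
          le_trans natDegree_mul_le (by simp)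
        have h2 : (Polynomial.Chebyshev.T ℝ ((m : ℤ) + 1)).natDegree ≤ m + 1 := by
          have := ih (m + 1) (by omega)
          rwa [show ((m+1 : ℕ) : ℤ) = (m : ℤ) + 1 by push_cast; ring] at this
        omega
      · exact le_trans (ih m (by omega)) (by omega)

private lemma neg_one_pow_mul_self (k : ℕ) : ((-1 : ℝ) ^ k) * ((-1) ^ k) = 1 := by
  rcases Nat.even_or_odd k with h | h <;> rw [h.neg_one_pow] <;> norm_num

private lemma alt_zeros {f : ℝ → ℝ} (hf : Continuous f) {q : ℕ} (x : ℕ → ℝ)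
    (hmono : ∀ i j : ℕ, i < j → j ≤ q → x i < x j)
    (hsign : ∀ k ≤ q, 0 < (-1 : ℝ) ^ k * f (x k)) :
    ∃ c : ℕ → ℝ, ∀ k < q, c k ∈ Ioo (x k) (x (k+1)) ∧ f (c k) = 0 := by
  have H : ∀ k, ∃ cc : ℝ, k < q → cc ∈ Ioo (x k) (x (k+1)) ∧ f cc = 0 := by
    intro k
    by_cases hk : k < q
    · have h1 := hsign k hk.le
      have h2 := hsign (k+1) hk
      have hle : x k ≤ x (k+1) := (hmono k (k+1) (lt_add_one k) hk).le
      rcases Nat.even_or_odd k with he | ho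
      · have e1 : (0 : ℝ) < f (x k) := by rw [he.neg_one_pow] at h1; linarith
        have e2 : f (x (k+1)) < 0 := by
          rw [(he.add_one).neg_one_pow] at h2; linarith
        obtain ⟨cc, hcc, hfc⟩ :=
          intermediate_value_Ioo' hle hf.continuousOn (show (0:ℝ) ∈ Ioo (f (x (k+1))) (f (x k)) from ⟨e2, e1⟩)
        exact ⟨cc, fun _ => ⟨hcc, hfc⟩⟩
      · have e1 : f (x k) < 0 := by rw [ho.neg_one_pow] at h1; linarith
        have e2 : (0 : ℝ) < f (x (k+1)) := by
          rw [(Even.neg_one_pow (by simpa using ho.add_one))] at h2; linarith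
        obtain ⟨cc, hcc, hfc⟩ :=
          intermediate_value_Ioo hle hf.continuousOn (show (0:ℝ) ∈ Ioo (f (x k)) (f (x (k+1))) from ⟨e1, e2⟩)
        exact ⟨cc, fun _ => ⟨hcc, hfc⟩⟩
    · exact ⟨0, fun h => absurd h hk⟩
  choose c hc using H
  exact ⟨c, fun k hk => hc k hk⟩
set_option maxHeartbeats 1000000 in
theorem zeros_of_Sn_sub_p
    (a b : ℝ) (ha : 0 < a) (hab : a < b)
    (n : ℕ) (hn : 0 < n) (hne : Even n)
    (E : Set ℝ) (hE : E = Icc (-b) (-a) ∪ Icc a b)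
    (S : ℝ → ℝ)
    (hS : ∀ x : ℝ, S x =
      (Polynomial.Chebyshev.T ℝ ((n / 2 : ℕ) : ℤ)).eval
        ((2 * x ^ 2 - a ^ 2 - b ^ 2) / (b ^ 2 - a ^ 2)))
    (p : Polynomial ℝ) (hdeg : p.natDegree ≤ n)
    (hnorm : ∀ t ∈ E, |p.eval t| < 1) :
    ∃ s t : Finset ℝ,
      Disjoint s t ∧
      s.card = n / 2 ∧ t.card = n / 2 ∧
      (↑s : Set ℝ) ⊆ Icc (-b) (-a) ∧ (↑t : Set ℝ) ⊆ Icc a b ∧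
      (∀ x ∈ s ∪ t, S x - p.eval x = 0) ∧
      (∀ x : ℝ, S x - p.eval x = 0 → x ∈ s ∪ t) := by
  set q : ℕ := n / 2 with hqdef
  obtain ⟨m, hm⟩ := hne
  have hq : 0 < q := by omega
  have hn2 : n = 2 * q := by omega
  have hb : 0 < b := lt_trans ha hab
  have hD : 0 < b ^ 2 - a ^ 2 := by nlinarith
  have hq0 : (0 : ℝ) < (q : ℝ) := by exact_mod_cast hq
  -- angles
  set θ : ℕ → ℝ := fun k => k * Real.pi / q with hθdef
  have hθmem : ∀ k ≤ q, θ k ∈ Icc 0 Real.pi := by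
    intro k hk
    have hkq : (k : ℝ) ≤ q := by exact_mod_cast hk
    constructor
    · have := Real.pi_pos; positivity
    · rw [div_le_iff₀ hq0]
      nlinarith [Real.pi_pos]
  have hθmono : ∀ i j : ℕ, i < j → θ i < θ j := by
    intro i j hij
    have h : (i : ℝ) < j := by exact_mod_cast hij
    have := Real.pi_pos
    simp only [hθdef]
    gcongr
  -- values under the quadratic map
  set vX : ℕ → ℝ := fun k => (a^2 + b^2 - Real.cos (θ k) * (b^2 - a^2)) / 2 with hvXdef
  set vY : ℕ → ℝ := fun k => (a^2 + b^2 + Real.cos (θ k) * (b^2 - a^2)) / 2 with hvYdef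
  have hvXb : ∀ k, a^2 ≤ vX k ∧ vX k ≤ b^2 := by
    intro k
    have h1 := Real.neg_one_le_cos (θ k)
    have h2 := Real.cos_le_one (θ k)
    constructor <;> [skip; skip] <;> simp only [hvXdef] <;> nlinarith
  have hvYb : ∀ k, a^2 ≤ vY k ∧ vY k ≤ b^2 := by
    intro k
    have h1 := Real.neg_one_le_cos (θ k)
    have h2 := Real.cos_le_one (θ k)
    constructor <;> [skip; skip] <;> simp only [hvYdef] <;> nlinarith
  set X : ℕ → ℝ := fun k => Real.sqrt (vX k) with hXdef
  set Y : ℕ → ℝ := fun k => -Real.sqrt (vY k) with hYdef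
  have hXmem : ∀ k, X k ∈ Icc a b := by
    intro k
    constructor
    · have := Real.sqrt_le_sqrt (hvXb k).1
      rwa [Real.sqrt_sq ha.le] at this
    · have := Real.sqrt_le_sqrt (hvXb k).2
      rwa [Real.sqrt_sq hb.le] at this
  have hYmem : ∀ k, Y k ∈ Icc (-b) (-a) := by
    intro k
    constructor
    · have := Real.sqrt_le_sqrt (hvYb k).2
      rw [Real.sqrt_sq hb.le] at this
      simp only [hYdef]; linarith
    · have := Real.sqrt_le_sqrt (hvYb k).1
      rw [Real.sqrt_sq ha.le] at this
      simp only [hYdef]; linarith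
  -- monotonicity
  have hcosmono : ∀ i j : ℕ, i < j → j ≤ q → Real.cos (θ j) < Real.cos (θ i) := by
    intro i j hij hj
    exact Real.strictAntiOn_cos (hθmem i (by omega)) (hθmem j hj) (hθmono i j hij)
  have hXmono : ∀ i j : ℕ, i < j → j ≤ q → X i < X j := by
    intro i j hij hj
    simp only [hXdef]
    apply Real.sqrt_lt_sqrt
    · nlinarith [(hvXb i).1, sq_nonneg a]
    · have := hcosmono i j hij hj
      simp only [hvXdef]
      nlinarith
  have hYmono : ∀ i j : ℕ, i < j → j ≤ q → Y i < Y j := by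
    intro i j hij hj
    simp only [hYdef, neg_lt_neg_iff]
    apply Real.sqrt_lt_sqrt
    · nlinarith [(hvYb j).1, sq_nonneg a]
    · have := hcosmono i j hij hj
      simp only [hvYdef]
      nlinarith
  -- S values at the extreme points
  have hcoskpi : ∀ k : ℕ, Real.cos (k * Real.pi) = (-1 : ℝ) ^ k := by
    intro k
    have := Real.cos_nat_mul_pi_sub 0 k
    simpa using this
  have hθq : ∀ k : ℕ, ((q : ℝ)) * θ k = k * Real.pi := by
    intro k
    simp only [hθdef]
    field_simp
  have hSX : ∀ k : ℕ, S (X k) = (-1 : ℝ) ^ q * (-1 : ℝ) ^ k := by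
    intro k
    rw [hS]
    have hx2 : (X k) ^ 2 = vX k := Real.sq_sqrt (by nlinarith [(hvXb k).1, sq_nonneg a])
    have harg : (2 * (X k) ^ 2 - a ^ 2 - b ^ 2) / (b ^ 2 - a ^ 2) = -Real.cos (θ k) := by
      rw [hx2]
      simp only [hvXdef]
      field_simp
      ring
    rw [harg, ← Real.cos_pi_sub, Polynomial.Chebyshev.T_real_cos]
    have h3 : ((q : ℤ) : ℝ) * (Real.pi - θ k) = (q : ℝ) * Real.pi - k * Real.pi := by
      push_cast
      rw [mul_sub, hθq]
    rw [h3]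
    rw [show ((q : ℝ)) * Real.pi - (k : ℝ) * Real.pi = (q : ℕ) * Real.pi - (k : ℝ) * Real.pi by push_cast; ring]
    rw [Real.cos_nat_mul_pi_sub, hcoskpi]
  have hSY : ∀ k : ℕ, S (Y k) = (-1 : ℝ) ^ k := by
    intro k
    rw [hS]
    have hx2 : (Y k) ^ 2 = vY k := by
      simp only [hYdef]
      rw [neg_sq]
      exact Real.sq_sqrt (by nlinarith [(hvYb k).1, sq_nonneg a])
    have harg : (2 * (Y k) ^ 2 - a ^ 2 - b ^ 2) / (b ^ 2 - a ^ 2) = Real.cos (θ k) := by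
      rw [hx2]
      simp only [hvYdef]
      field_simp
      ring
    rw [harg, Polynomial.Chebyshev.T_real_cos]
    have h3 : ((q : ℤ) : ℝ) * θ k = (k : ℕ) * Real.pi := by push_cast [← hθq]; ring
    rw [h3, hcoskpi]
  -- the polynomial
  set w : Polynomial ℝ := Polynomial.C (2/(b^2-a^2)) * Polynomial.X^2 - Polynomial.C ((a^2+b^2)/(b^2-a^2)) with hwdef
  set Q : Polynomial ℝ := (Polynomial.Chebyshev.T ℝ (q : ℤ)).comp w - p with hQdef
  have hQev : ∀ x : ℝ, Q.eval x = S x - p.eval x := by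
    intro x
    have harg : (2/(b^2-a^2)) * x^2 - (a^2+b^2)/(b^2-a^2) = (2*x^2 - a^2 - b^2)/(b^2-a^2) := by
      ring
    rw [hQdef, hS, eval_sub, eval_comp, hwdef]
    simp only [eval_sub, eval_mul, eval_pow, eval_C, eval_X]
    rw [harg]
  have hQdeg : Q.natDegree ≤ n := by
    rw [hQdef]
    refine le_trans (natDegree_sub_le _ _) (max_le ?_ hdeg)
    refine le_trans natDegree_comp_le ?_
    have h1 : (Polynomial.Chebyshev.T ℝ (q : ℤ)).natDegree ≤ q := T_natDeg_le q
    have h2 : w.natDegree ≤ 2 := by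
      rw [hwdef]
      refine le_trans (natDegree_sub_le _ _) (max_le ?_ (by simp))
      refine le_trans natDegree_mul_le ?_
      simp [natDegree_X_pow]
    calc (Polynomial.Chebyshev.T ℝ (q : ℤ)).natDegree * w.natDegree
        ≤ q * 2 := Nat.mul_le_mul h1 h2
      _ = n := by omega
  -- bounds on p at the extreme points
  have hpX : ∀ k, |p.eval (X k)| < 1 := fun k => hnorm _ (by rw [hE]; exact Or.inr (hXmem k))
  have hpY : ∀ k, |p.eval (Y k)| < 1 := fun k => hnorm _ (by rw [hE]; exact Or.inl (hYmem k))
  -- zeros on the negative interval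
  have hQcont : Continuous fun x : ℝ => Q.eval x := Q.continuous
  obtain ⟨cY, hcY⟩ := alt_zeros hQcont Y hYmono (by
    intro k hk
    have h1 := (abs_lt.mp (hpY k)).1
    have h2 := (abs_lt.mp (hpY k)).2
    show (0:ℝ) < (-1)^k * Q.eval (Y k)
    rw [hQev, hSY]
    rcases Nat.even_or_odd k with h | h <;> rw [h.neg_one_pow] <;> nlinarith)
  obtain ⟨cX, hcX⟩ := alt_zeros (f := fun x : ℝ => (-1:ℝ)^q * Q.eval x)
    (continuous_const.mul hQcont) X hXmono (by
    intro k hk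
    have h1 := (abs_lt.mp (hpX k)).1
    have h2 := (abs_lt.mp (hpX k)).2
    show (0:ℝ) < (-1)^k * ((-1)^q * Q.eval (X k))
    rw [hQev, hSX]
    rcases Nat.even_or_odd k with h | h <;>
      rcases Nat.even_or_odd q with h' | h' <;>
        rw [h.neg_one_pow, h'.neg_one_pow] <;> nlinarith)
  have hcX0 : ∀ k < q, Q.eval (cX k) = 0 := by
    intro k hk
    have := (hcX k hk).2
    rcases Nat.even_or_odd q with h' | h' <;> rw [h'.neg_one_pow] at this <;> linarith
  -- strict ordering of the zeros
  have hstrict : ∀ (x c : ℕ → ℝ), (∀ i j : ℕ, i < j → j ≤ q → x i < x j) →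
      (∀ k < q, c k ∈ Ioo (x k) (x (k+1))) →
      ∀ i j : ℕ, i < q → j < q → i < j → c i < c j := by
    intro x c hm hc i j hi hj hij
    have h1 : c i < x (i+1) := (hc i hi).2
    have h2 : x j < c j := (hc j hj).1
    have h3 : x (i+1) ≤ x j := by
      rcases eq_or_lt_of_le (Nat.succ_le_of_lt hij) with h | h
      · exact le_of_eq (congrArg x h)
      · exact (hm _ _ h hj.le).le
    linarith
  have hcYIoo : ∀ k < q, cY k ∈ Ioo (Y k) (Y (k+1)) := fun k hk => (hcY k hk).1
  have hcXIoo : ∀ k < q, cX k ∈ Ioo (X k) (X (k+1)) := fun k hk => (hcX k hk).1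
  have hinjY : Set.InjOn cY (Finset.range q) := by
    intro i hi j hj hij
    simp only [Finset.coe_range, Set.mem_Iio] at hi hj
    by_contra hne'
    rcases Nat.lt_or_ge i j with h | h
    · exact absurd hij (ne_of_lt (hstrict Y cY hYmono hcYIoo i j hi hj h))
    · rcases Nat.lt_or_ge j i with h' | h'
      · exact absurd hij.symm (ne_of_lt (hstrict Y cY hYmono hcYIoo j i hj hi h'))
      · omega
  have hinjX : Set.InjOn cX (Finset.range q) := by
    intro i hi j hj hij
    simp only [Finset.coe_range, Set.mem_Iio] at hi hj
    by_contra hne'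
    rcases Nat.lt_or_ge i j with h | h
    · exact absurd hij (ne_of_lt (hstrict X cX hXmono hcXIoo i j hi hj h))
    · rcases Nat.lt_or_ge j i with h' | h'
      · exact absurd hij.symm (ne_of_lt (hstrict X cX hXmono hcXIoo j i hj hi h'))
      · omega
  refine ⟨(Finset.range q).image cY, (Finset.range q).image cX, ?_, ?_, ?_, ?_, ?_, ?_, ?_⟩
  · -- disjoint
    rw [Finset.disjoint_left]
    intro x hx hx'
    simp only [Finset.mem_image, Finset.mem_range] at hx hx'
    obtain ⟨i, hi, rfl⟩ := hx
    obtain ⟨j, hj, hji⟩ := hx'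
    have h1 : cY i < Y (i+1) := (hcYIoo i hi).2
    have h2 : X j < cX j := (hcXIoo j hj).1
    have h3 : Y (i+1) ≤ -a := (hYmem (i+1)).2
    have h4 : a ≤ X j := (hXmem j).1
    rw [hji] at h2
    linarith
  · rw [Finset.card_image_of_injOn hinjY, Finset.card_range]
  · rw [Finset.card_image_of_injOn hinjX, Finset.card_range]
  · intro x hx
    simp only [Finset.coe_image, Finset.coe_range, Set.mem_image, Set.mem_Iio] at hx
    obtain ⟨k, hk, rfl⟩ := hx
    have h1 : Y k < cY k := (hcYIoo k hk).1
    have h2 : cY k < Y (k+1) := (hcYIoo k hk).2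
    exact ⟨le_trans (hYmem k).1 h1.le, le_trans h2.le (hYmem (k+1)).2⟩
  · intro x hx
    simp only [Finset.coe_image, Finset.coe_range, Set.mem_image, Set.mem_Iio] at hx
    obtain ⟨k, hk, rfl⟩ := hx
    have h1 : X k < cX k := (hcXIoo k hk).1
    have h2 : cX k < X (k+1) := (hcXIoo k hk).2
    exact ⟨le_trans (hXmem k).1 h1.le, le_trans h2.le (hXmem (k+1)).2⟩
  · intro x hx
    rw [← hQev]
    rw [Finset.mem_union] at hx
    rcases hx with hx | hx <;> simp only [Finset.mem_image, Finset.mem_range] at hx <;>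
      obtain ⟨k, hk, rfl⟩ := hx
    · exact (hcY k hk).2
    · exact hcX0 k hk
  · -- completeness
    have hQne : Q ≠ 0 := by
      intro hcontra
      have h1 := hQev (X 0)
      rw [hcontra, eval_zero, hSX] at h1
      have h2 := abs_lt.mp (hpX 0)
      rcases Nat.even_or_odd q with h' | h' <;> rw [h'.neg_one_pow] at h1 <;>
        simp only [pow_zero, mul_one] at h1 <;> linarith [h2.1, h2.2]
    intro x hx
    have hx0 : Q.eval x = 0 := by rw [hQev]; exact hx
    have hmem : x ∈ Q.roots.toFinset :=
      Multiset.mem_toFinset.mpr (Polynomial.mem_roots'.mpr ⟨hQne, hx0⟩)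
    have hdisj : Disjoint ((Finset.range q).image cY) ((Finset.range q).image cX) := by
      rw [Finset.disjoint_left]
      intro y hy hy'
      simp only [Finset.mem_image, Finset.mem_range] at hy hy'
      obtain ⟨i, hi, rfl⟩ := hy
      obtain ⟨j, hj, hji⟩ := hy'
      have h1 : cY i < Y (i+1) := (hcYIoo i hi).2
      have h2 : X j < cX j := (hcXIoo j hj).1
      have h3 : Y (i+1) ≤ -a := (hYmem (i+1)).2
      have h4 : a ≤ X j := (hXmem j).1
      rw [hji] at h2
      linarith
    have hsubroots : (Finset.range q).image cY ∪ (Finset.range q).image cX ⊆ Q.roots.toFinset := by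
      intro y hy
      rw [Finset.mem_union] at hy
      have hy0 : Q.eval y = 0 := by
        rcases hy with hy | hy <;> simp only [Finset.mem_image, Finset.mem_range] at hy <;>
          obtain ⟨k, hk, rfl⟩ := hy
        · exact (hcY k hk).2
        · exact hcX0 k hk
      exact Multiset.mem_toFinset.mpr (Polynomial.mem_roots'.mpr ⟨hQne, hy0⟩)
    have hcardst : ((Finset.range q).image cY ∪ (Finset.range q).image cX).card = n := by
      rw [Finset.card_union_of_disjoint hdisj, Finset.card_image_of_injOn hinjY,
        Finset.card_image_of_injOn hinjX, Finset.card_range]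
      omega
    have hcardroots : Q.roots.toFinset.card ≤ n :=
      le_trans (Multiset.toFinset_card_le _) (le_trans (Polynomial.card_roots' Q) hQdeg)
    have heq : (Finset.range q).image cY ∪ (Finset.range q).image cX = Q.roots.toFinset :=
      Finset.eq_of_subset_of_card_le hsubroots (by rw [hcardst]; exact hcardroots)
    rw [heq]
    exact hmem
end

section
/- Let 0 < a < b be real numbers. Then the function f(x) = x / √((b² − x²)(x² − a²)) is convex on the open interval (a, b). -/
/-!
On `(a, b)` we have `(b² - x²)(x² - a²) / x² = a² + b² - x² - a²b² / x²`, so the function equals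
`(√φ)⁻¹` with `φ x = a² + b² - x² - a²b² / x²` concave and positive there. Composing with the
concave increasing `√` keeps concavity, and composing with the convex decreasing `y ↦ y⁻¹`
turns it into convexity.
-/

open Set

section Composition

variable {𝕜 E α β : Type*} [Semiring 𝕜] [PartialOrder 𝕜] [AddCommMonoid E]
  [AddCommMonoid α] [PartialOrder α] [AddCommMonoid β] [PartialOrder β]
  [SMul 𝕜 E] [SMul 𝕜 α] [SMul 𝕜 β] {s : Set E} {t : Set β} {f : E → β} {g : β → α}

theorem ConcaveOn.comp_of_mapsTo (hg : ConcaveOn 𝕜 t g) (hf : ConcaveOn 𝕜 s f)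
    (hfst : MapsTo f s t) (hg' : MonotoneOn g t) : ConcaveOn 𝕜 s (g ∘ f) :=
  ⟨hf.1, fun _ hx _ hy _ _ ha hb hab =>
    (hg.2 (hfst hx) (hfst hy) ha hb hab).trans <|
      hg' (hg.1 (hfst hx) (hfst hy) ha hb hab) (hfst <| hf.1 hx hy ha hb hab) <|
        hf.2 hx hy ha hb hab⟩

theorem ConvexOn.comp_concaveOn_of_mapsTo (hg : ConvexOn 𝕜 t g) (hf : ConcaveOn 𝕜 s f)
    (hfst : MapsTo f s t) (hg' : AntitoneOn g t) : ConvexOn 𝕜 s (g ∘ f) :=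
  hg.dual.comp_of_mapsTo hf hfst hg'

end Composition

theorem concaveOn_sub_sq_sub_div_sq (c d : ℝ) (hc : 0 ≤ c) :
    ConcaveOn ℝ (Ioi 0) fun x : ℝ => d - x ^ 2 - c / x ^ 2 := by
  have hconvex : ConvexOn ℝ (Ioi 0) fun x : ℝ => x ^ 2 + c • x ^ (-2 : ℤ) :=
    ((convexOn_pow 2).subset Ioi_subset_Ici_self (convex_Ioi 0)).add
      ((convexOn_zpow (-2)).smul hc)
  refine (hconvex.neg.add (concaveOn_const d (convex_Ioi 0))).congr fun x _ => ?_
  simp only [Pi.neg_apply, Pi.add_apply, smul_eq_mul, zpow_neg, zpow_ofNat]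
  ring

theorem density_convex_on_component_general
    (a b : ℝ) (ha : 0 < a) :
    ConvexOn ℝ (Ioo a b)
      (fun x : ℝ => x / Real.sqrt ((b ^ 2 - x ^ 2) * (x ^ 2 - a ^ 2))) := by
  set φ : ℝ → ℝ := fun x => a ^ 2 + b ^ 2 - x ^ 2 - (a * b) ^ 2 / x ^ 2
  have hφ_eq : ∀ x ∈ Ioo a b, φ x = (b ^ 2 - x ^ 2) * (x ^ 2 - a ^ 2) / x ^ 2 := by
    intro x hx
    have : x ≠ 0 := (ha.trans hx.1).ne'
    simp only [φ]
    field_simp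
    ring
  have hφ_pos : ∀ x ∈ Ioo a b, 0 < φ x := fun x hx => by
    rw [hφ_eq x hx]
    have hx₀ : 0 < x := ha.trans hx.1
    have hb : 0 < b ^ 2 - x ^ 2 := by nlinarith [hx.2]
    have ha' : 0 < x ^ 2 - a ^ 2 := by nlinarith [hx.1]
    exact div_pos (mul_pos hb ha') (pow_pos hx₀ 2)
  have hφ_concave : ConcaveOn ℝ (Ioo a b) φ :=
    (concaveOn_sub_sq_sub_div_sq _ _ (sq_nonneg _)).subset
      (Ioo_subset_Ioi_self.trans (Ioi_subset_Ioi ha.le)) (convex_Ioo a b)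
  have hsqrt_concave : ConcaveOn ℝ (Ioo a b) (Real.sqrt ∘ φ) :=
    Real.strictConcaveOn_sqrt.concaveOn.comp_of_mapsTo hφ_concave
      (fun x hx => (hφ_pos x hx).le) fun _ _ _ _ h => Real.sqrt_le_sqrt h
  have hinv_convex : ConvexOn ℝ (Ioi 0) fun y : ℝ => y⁻¹ := by
    simpa only [zpow_neg_one] using convexOn_zpow (𝕜 := ℝ) (-1)
  refine (hinv_convex.comp_concaveOn_of_mapsTo hsqrt_concave
    (fun x hx => Real.sqrt_pos.2 (hφ_pos x hx)) antitoneOn_inv_pos).congr fun x hx => ?_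
  change (√(φ x))⁻¹ = _
  rw [hφ_eq x hx, Real.sqrt_div' _ (sq_nonneg x),
    Real.sqrt_sq (ha.trans hx.1).le, inv_div]

theorem density_convex_on_component
    (a b : ℝ) (ha : 0 < a) (hab : a < b) :
    ConvexOn ℝ (Ioo a b)
      (fun x : ℝ => x / Real.sqrt ((b ^ 2 - x ^ 2) * (x ^ 2 - a ^ 2))) :=
  density_convex_on_component_general a b ha
end

section
/- Let a be a real number with 0 < a ≤ 1/8, let E = [−1,−a] ∪ [a,1], and define m_4(x) = (8x⁴ − 8x²(1+a²) + 1 + 6a² + a⁴)/(1−a²)² and T_3(x) = 4x³ − 3x. Then: (i) |T_3(x)| ≤ 1 for all x ∈ E; (ii) |m_4(x)| ≤ 1 for all x ∈ E; (iii) m_4′(a) = −16a/(1−a²); and (iv) |T_3′(a)| = 3 − 12a² > 16a/(1−a²) = |m_4′(a)|. -/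
open Set Polynomial Polynomial.Chebyshev

/-!
Both intervals of `E` are carried onto `[-1, 1]` by the substitution
`t(x) = (2x² - 1 - a²)/(1 - a²)`, which is affine in `x²`, and `m₄ = T₂ ∘ t`. Hence both sup-norm
bounds are instances of `|Tₙ| ≤ 1` on `[-1, 1]`. Since `t(a) = -1`, the chain rule gives
`m₄'(a) = T₂'(-1) · t'(a) = -4 · 4a/(1 - a²)`, while `T₃'(a) = 12a² - 3`; for `a ≤ 1/8` the
latter is larger in absolute value.
-/

theorem Polynomial.Chebyshev.T_three (R : Type*) [CommRing R] : T R 3 = 4 * X ^ 3 - 3 * X := by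
  have h := T_add_two R 1
  norm_num [T_two] at h
  rw [h]; ring

theorem abs_mem_Icc_iff_mem_Icc_union_Icc {a b x : ℝ} (ha : 0 ≤ a) :
    |x| ∈ Icc a b ↔ x ∈ Icc (-b) (-a) ∪ Icc a b := by
  simp only [mem_union, mem_Icc]
  rcases le_total 0 x with hx | hx
  · rw [abs_of_nonneg hx]
    refine ⟨Or.inr, ?_⟩
    rintro (h | h) <;> constructor <;> linarith [h.1, h.2]
  · rw [abs_of_nonpos hx]
    refine ⟨fun h => Or.inl ⟨by linarith, by linarith⟩, ?_⟩
    rintro (h | h) <;> constructor <;> linarith [h.1, h.2]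

noncomputable def twoIntervalSubst (a x : ℝ) : ℝ := (2 * x ^ 2 - 1 - a ^ 2) / (1 - a ^ 2)

section twoIntervalSubst

variable {a : ℝ}

theorem twoIntervalSubst_self (ha : a ^ 2 ≠ 1) : twoIntervalSubst a a = -1 := by
  have h : 1 - a ^ 2 ≠ 0 := sub_ne_zero.2 (Ne.symm ha)
  rw [twoIntervalSubst]; field_simp; ring

theorem abs_twoIntervalSubst_le_one {x : ℝ} (ha : |a| < 1) (hax : |a| ≤ |x|) (hx : |x| ≤ 1) :
    |twoIntervalSubst a x| ≤ 1 := by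
  have h : 0 < 1 - a ^ 2 := by linarith [(sq_lt_one_iff_abs_lt_one a).2 ha]
  have hax' : a ^ 2 ≤ x ^ 2 := sq_le_sq.2 hax
  have hx' : x ^ 2 ≤ 1 := (sq_le_one_iff_abs_le_one x).2 hx
  rw [twoIntervalSubst, abs_div, abs_of_pos h, div_le_one h, abs_le]
  constructor <;> linarith

theorem eval_T_two_twoIntervalSubst (ha : a ^ 2 ≠ 1) (x : ℝ) :
    (T ℝ 2).eval (twoIntervalSubst a x) =
      (8 * x ^ 4 - 8 * x ^ 2 * (1 + a ^ 2) + 1 + 6 * a ^ 2 + a ^ 4) / (1 - a ^ 2) ^ 2 := by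
  have h : 1 - a ^ 2 ≠ 0 := sub_ne_zero.2 (Ne.symm ha)
  simp only [T_two, eval_sub, eval_mul, eval_pow, eval_X, eval_ofNat, eval_one, twoIntervalSubst]
  field_simp; ring

theorem hasDerivAt_twoIntervalSubst (x : ℝ) :
    HasDerivAt (twoIntervalSubst a) (4 * x / (1 - a ^ 2)) x :=
  ((((hasDerivAt_pow 2 x).const_mul 2).sub_const 1).sub_const (a ^ 2)).div_const (1 - a ^ 2)
    |>.congr_deriv (by push_cast; ring)

theorem hasDerivAt_eval_T_two_twoIntervalSubst_self (ha : a ^ 2 ≠ 1) :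
    HasDerivAt (fun x => (T ℝ 2).eval (twoIntervalSubst a x)) (-(16 * a) / (1 - a ^ 2)) a := by
  have hT₂' : (derivative (T ℝ 2)).eval (-1) = -4 := by
    norm_num [T_derivative_eq_U, U_one]
  refine (((T ℝ 2).hasDerivAt _).comp a (hasDerivAt_twoIntervalSubst a)).congr_deriv ?_
  rw [twoIntervalSubst_self ha, hT₂']; ring

end twoIntervalSubst

theorem hasDerivAt_four_mul_cube_sub_three_mul (x : ℝ) :
    HasDerivAt (fun x : ℝ => 4 * x ^ 3 - 3 * x) (12 * x ^ 2 - 3) x :=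
  (((hasDerivAt_pow 3 x).const_mul 4).sub ((hasDerivAt_id x).const_mul 3)).congr_deriv
    (by push_cast; ring)

theorem sixteen_mul_div_one_sub_sq_lt {a : ℝ} (ha : 0 < a) (ha' : a ≤ 1 / 8) :
    16 * a / (1 - a ^ 2) < 3 - 12 * a ^ 2 := by
  rw [div_lt_iff₀ (by nlinarith)]; nlinarith

theorem gap_condition_essential_counterexample
    (a : ℝ) (ha : 0 < a) (ha' : a ≤ 1 / 8)
    (E : Set ℝ) (hE : E = Icc (-1 : ℝ) (-a) ∪ Icc a 1)
    (m4 T3 : ℝ → ℝ)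
    (hm4 : ∀ x : ℝ, m4 x =
      (8 * x ^ 4 - 8 * x ^ 2 * (1 + a ^ 2) + 1 + 6 * a ^ 2 + a ^ 4) / (1 - a ^ 2) ^ 2)
    (hT3 : ∀ x : ℝ, T3 x = 4 * x ^ 3 - 3 * x) :
    (∀ x ∈ E, |T3 x| ≤ 1) ∧
    (∀ x ∈ E, |m4 x| ≤ 1) ∧
    deriv m4 a = -(16 * a) / (1 - a ^ 2) ∧
    (|deriv T3 a| = 3 - 12 * a ^ 2 ∧
      3 - 12 * a ^ 2 > 16 * a / (1 - a ^ 2) ∧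
      16 * a / (1 - a ^ 2) = |deriv m4 a|) := by
  have ha₁ : |a| < 1 := by rw [abs_of_pos ha]; linarith
  have ha₂ : a ^ 2 ≠ 1 := ((sq_lt_one_iff_abs_lt_one a).2 ha₁).ne
  have hm4_eq : m4 = fun x => (T ℝ 2).eval (twoIntervalSubst a x) :=
    funext fun x => (hm4 x).trans (eval_T_two_twoIntervalSubst ha₂ x).symm
  have hdm4 : deriv m4 a = -(16 * a) / (1 - a ^ 2) :=
    hm4_eq ▸ (hasDerivAt_eval_T_two_twoIntervalSubst_self ha₂).deriv
  have hdT3 : deriv T3 a = 12 * a ^ 2 - 3 :=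
    (funext hT3 : T3 = _) ▸ (hasDerivAt_four_mul_cube_sub_three_mul a).deriv
  have hE_abs : ∀ x ∈ E, a ≤ |x| ∧ |x| ≤ 1 := fun x hx =>
    (abs_mem_Icc_iff_mem_Icc_union_Icc ha.le).2 (hE ▸ hx)
  refine ⟨fun x hx => ?_, fun x hx => ?_, hdm4, ?_, sixteen_mul_div_one_sub_sq_lt ha ha', ?_⟩
  · simpa [hT3, T_three] using abs_eval_T_real_le_one 3 (hE_abs x hx).2
  · rw [hm4_eq]
    exact abs_eval_T_real_le_one 2 <| abs_twoIntervalSubst_le_one ha₁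
      ((abs_of_pos ha).trans_le (hE_abs x hx).1) (hE_abs x hx).2
  · rw [hdT3, abs_of_nonpos (by nlinarith)]; ring
  · rw [hdm4, abs_div, abs_neg, abs_of_pos (by positivity : 0 < 16 * a),
      abs_of_pos (by nlinarith : 0 < 1 - a ^ 2)]
end

section
/- Define r(x) = (72x² − 5x)/(100x² + 1) and m_2(x) = (102x² − 1)/(100x² + 1). Then |r(x)| ≤ 1 for all x ∈ [−1, 1], and r′(1) = 639/10201 > 404/10201 = m_2′(1). -/
open Set

theorem hasDerivAt_quadratic_div_quadratic (a b c d e f x : ℝ)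
    (hx : d * x ^ 2 + e * x + f ≠ 0) :
    HasDerivAt (fun x => (a * x ^ 2 + b * x + c) / (d * x ^ 2 + e * x + f))
      (((2 * a * x + b) * (d * x ^ 2 + e * x + f) - (a * x ^ 2 + b * x + c) * (2 * d * x + e))
        / (d * x ^ 2 + e * x + f) ^ 2) x := by
  have hquad (a b c : ℝ) :
      HasDerivAt (fun x => a * x ^ 2 + b * x + c) (2 * a * x + b) x := by
    have := (((hasDerivAt_pow 2 x).const_mul a).add ((hasDerivAt_id x).const_mul b)).add_const c
    exact this.congr_deriv (by simp only [Nat.cast_ofNat, mul_one]; ring)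
  exact (hquad a b c).div (hquad d e f) hx

/-- The two quadratics `28x² + 5x + 1` and `172x² - 5x + 1` behind the bound have negative
discriminant, so the bound holds on all of `ℝ`. -/
theorem abs_rusak_fraction_le_one (x : ℝ) :
    |(72 * x ^ 2 - 5 * x) / (100 * x ^ 2 + 1)| ≤ 1 := by
  have hden : (0 : ℝ) < 100 * x ^ 2 + 1 := by positivity
  rw [abs_div, abs_of_pos hden, div_le_one hden, abs_le]
  constructor <;> nlinarith [sq_nonneg (10 * x - 1), sq_nonneg (2 * x + 5)]

theorem pole_condition_essential_counterexample
    (r m2 : ℝ → ℝ)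
    (hr : ∀ x : ℝ, r x = (72 * x ^ 2 - 5 * x) / (100 * x ^ 2 + 1))
    (hm2 : ∀ x : ℝ, m2 x = (102 * x ^ 2 - 1) / (100 * x ^ 2 + 1)) :
    (∀ x ∈ Icc (-1 : ℝ) 1, |r x| ≤ 1) ∧
    deriv r 1 = 639 / 10201 ∧
    (639 : ℝ) / 10201 > 404 / 10201 ∧
    deriv m2 1 = 404 / 10201 := by
  have hr' : r = fun x => (72 * x ^ 2 + (-5) * x + 0) / (100 * x ^ 2 + 0 * x + 1) :=
    funext fun x => by rw [hr]; ring
  have hm2' : m2 = fun x => (102 * x ^ 2 + 0 * x + (-1)) / (100 * x ^ 2 + 0 * x + 1) :=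
    funext fun x => by rw [hm2]; ring
  refine ⟨fun x _ => hr x ▸ abs_rusak_fraction_le_one x, ?_, by norm_num, ?_⟩
  · rw [hr', (hasDerivAt_quadratic_div_quadratic _ _ _ _ _ _ 1 (by norm_num)).deriv]
    norm_num
  · rw [hm2', (hasDerivAt_quadratic_div_quadratic _ _ _ _ _ _ 1 (by norm_num)).deriv]
    norm_num
end
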